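/- arXiv:1105.4843 — 5 statements merged into one kernel-verified Lean document; each statement's English description precedes it below -/
import Mathlib

section
/- An Archimedean f-algebra E is faithful (i.e., x·y = 0 implies |x| ⊓ |y| = 0 for all x, y ∈ E) if and only if E has no nonzero nilpotent elements. -/
/-!
Write `x = x⁺ - x⁻` and `y = y⁺ - y⁻`. Since `x⁺ ⊓ x⁻ = y⁺ ⊓ y⁻ = 0`, the `f`-ring axiom makes
`x⁺ * y⁺` and `x⁻ * y⁻` disjoint from `x⁺ * y⁻` and `x⁻ * y⁺`, so `P = x⁺ * y⁺ + x⁻ * y⁻` and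
`N = x⁺ * y⁻ + x⁻ * y⁺` are disjoint. Hence `x * y = P - N = 0` forces `P = N = 0`, that is,
`|x| * |y| = P + N = 0`. Then `m = |x| ⊓ |y|` satisfies `0 ≤ m * m ≤ |x| * |y| = 0`, so `m`
vanishes as soon as `E` is reduced. Conversely, faithfulness turns `x * x = 0` into `|x| = 0`.
-/

/-- An `f`-algebra without its scalars. -/
structure IsFRing (E : Type*) [Mul E] [Zero E] [Lattice E] : Prop where
  mul_nonneg : ∀ a b : E, 0 ≤ a → 0 ≤ b → 0 ≤ a * b
  mul_inf_eq_zero : ∀ a x y : E, 0 ≤ a → 0 ≤ x → 0 ≤ y → x ⊓ y = 0 → (a * x) ⊓ y = 0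
  mul_inf_eq_zero' : ∀ a x y : E, 0 ≤ a → 0 ≤ x → 0 ≤ y → x ⊓ y = 0 → (x * a) ⊓ y = 0

def IsFaithful (E : Type*) [NonUnitalRing E] [Lattice E] : Prop :=
  ∀ x y : E, x * y = 0 → |x| ⊓ |y| = 0

section LatticeOrderedGroup

variable {E : Type*} [AddCommGroup E] [Lattice E] [IsOrderedAddMonoid E]

theorem eq_zero_of_abs_eq_zero {a : E} (h : |a| = 0) : a = 0 :=
  le_antisymm (h ▸ le_abs_self a) (neg_nonpos.1 (h ▸ neg_le_abs a))

theorem add_inf_eq_zero {a b c : E} (ha : 0 ≤ a) (hb : 0 ≤ b) (hc : 0 ≤ c)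
    (hac : a ⊓ c = 0) (hbc : b ⊓ c = 0) : (a + b) ⊓ c = 0 := by
  refine le_antisymm ?_ (le_inf (add_nonneg ha hb) hc)
  calc (a + b) ⊓ c ≤ (a + b) ⊓ (a + c) ⊓ c :=
        le_inf (inf_le_inf_left _ (le_add_of_nonneg_left ha)) inf_le_right
    _ = (a + b ⊓ c) ⊓ c := by rw [add_inf]
    _ = 0 := by rw [hbc, add_zero, hac]

end LatticeOrderedGroup

namespace IsFRing

section

variable {E : Type*} [Mul E] [Zero E] [Lattice E]

theorem mul_inf_mul_eq_zero (hE : IsFRing E) {a b x y : E} (ha : 0 ≤ a) (hb : 0 ≤ b)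
    (hx : 0 ≤ x) (hy : 0 ≤ y) (hxy : x ⊓ y = 0) : (a * x) ⊓ (b * y) = 0 := by
  have hax : (a * x) ⊓ y = 0 := hE.mul_inf_eq_zero a x y ha hx hy hxy
  rw [inf_comm] at hax ⊢
  exact hE.mul_inf_eq_zero b y _ hb hy (hE.mul_nonneg _ _ ha hx) hax

theorem mul_inf_mul_eq_zero' (hE : IsFRing E) {a b x y : E} (ha : 0 ≤ a) (hb : 0 ≤ b)
    (hx : 0 ≤ x) (hy : 0 ≤ y) (hxy : x ⊓ y = 0) : (x * a) ⊓ (y * b) = 0 := by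
  have hxa : (x * a) ⊓ y = 0 := hE.mul_inf_eq_zero' a x y ha hx hy hxy
  rw [inf_comm] at hxa ⊢
  exact hE.mul_inf_eq_zero' b y _ hb hy (hE.mul_nonneg _ _ hx ha) hxa

end

variable {E : Type*} [NonUnitalRing E] [Lattice E] [IsOrderedAddMonoid E]

theorem mul_le_mul (hE : IsFRing E) {a b c d : E} (hab : a ≤ b) (hcd : c ≤ d) (ha : 0 ≤ a)
    (hd : 0 ≤ d) : a * c ≤ b * d := by
  have : 0 ≤ (b - a) * d + a * (d - c) :=
    add_nonneg (hE.mul_nonneg _ _ (sub_nonneg.2 hab) hd) (hE.mul_nonneg _ _ ha (sub_nonneg.2 hcd))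
  rw [← sub_nonneg]
  convert this using 1
  noncomm_ring

theorem posPart_mul_add_negPart_mul_inf_eq_zero (hE : IsFRing E) (x y : E) :
    (x⁺ * y⁺ + x⁻ * y⁻) ⊓ (x⁺ * y⁻ + x⁻ * y⁺) = 0 := by
  have hx := posPart_inf_negPart_eq_zero x
  have hy := posPart_inf_negPart_eq_zero y
  have hx' : x⁻ ⊓ x⁺ = 0 := inf_comm x⁺ x⁻ ▸ hx
  have hy' : y⁻ ⊓ y⁺ = 0 := inf_comm y⁺ y⁻ ▸ hy
  have h₁ := posPart_nonneg x
  have h₂ := negPart_nonneg x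
  have h₃ := posPart_nonneg y
  have h₄ := negPart_nonneg y
  have hP := add_nonneg (hE.mul_nonneg _ _ h₁ h₃) (hE.mul_nonneg _ _ h₂ h₄)
  rw [inf_comm]
  apply add_inf_eq_zero (hE.mul_nonneg _ _ h₁ h₄) (hE.mul_nonneg _ _ h₂ h₃) hP <;> rw [inf_comm]
  · exact add_inf_eq_zero (hE.mul_nonneg _ _ h₁ h₃) (hE.mul_nonneg _ _ h₂ h₄)
      (hE.mul_nonneg _ _ h₁ h₄) (hE.mul_inf_mul_eq_zero h₁ h₁ h₃ h₄ hy)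
      (hE.mul_inf_mul_eq_zero' h₄ h₄ h₂ h₁ hx')
  · exact add_inf_eq_zero (hE.mul_nonneg _ _ h₁ h₃) (hE.mul_nonneg _ _ h₂ h₄)
      (hE.mul_nonneg _ _ h₂ h₃) (hE.mul_inf_mul_eq_zero' h₃ h₃ h₁ h₂ hx)
      (hE.mul_inf_mul_eq_zero h₂ h₂ h₄ h₃ hy')

theorem abs_mul_abs_eq_zero (hE : IsFRing E) {x y : E} (hxy : x * y = 0) : |x| * |y| = 0 := by
  have hPN : x⁺ * y⁺ + x⁻ * y⁻ = x⁺ * y⁻ + x⁻ * y⁺ := by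
    rw [← sub_eq_zero, ← hxy]
    conv_rhs => rw [← posPart_sub_negPart x, ← posPart_sub_negPart y]
    noncomm_ring
  have hP : x⁺ * y⁺ + x⁻ * y⁻ = 0 := by
    rw [← hE.posPart_mul_add_negPart_mul_inf_eq_zero x y, ← hPN, inf_idem]
  calc |x| * |y| = (x⁺ + x⁻) * (y⁺ + y⁻) := by rw [posPart_add_negPart, posPart_add_negPart]
    _ = (x⁺ * y⁺ + x⁻ * y⁻) + (x⁺ * y⁻ + x⁻ * y⁺) := by noncomm_ring
    _ = 0 := by rw [← hPN, hP, add_zero]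

end IsFRing

section Ring

variable {E : Type*} [Ring E] [Lattice E] [IsOrderedAddMonoid E]

theorem IsFaithful.isReduced (h : IsFaithful E) : IsReduced E :=
  (isReduced_iff_pow_one_lt 2 one_lt_two).2 fun x hx =>
    eq_zero_of_abs_eq_zero (by simpa only [inf_idem] using h x x (sq x ▸ hx))

theorem IsFRing.isFaithful (hE : IsFRing E) [IsReduced E] : IsFaithful E := fun x y hxy => by
  have hm : 0 ≤ |x| ⊓ |y| := le_inf (abs_nonneg x) (abs_nonneg y)
  refine IsReduced.eq_zero _ ⟨2, le_antisymm ?_ (sq (|x| ⊓ |y|) ▸ hE.mul_nonneg _ _ hm hm)⟩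
  calc (|x| ⊓ |y|) ^ 2 = (|x| ⊓ |y|) * (|x| ⊓ |y|) := sq _
    _ ≤ |x| * |y| := hE.mul_le_mul inf_le_left inf_le_right hm (abs_nonneg y)
    _ = 0 := hE.abs_mul_abs_eq_zero hxy

theorem IsFRing.isFaithful_iff_isReduced (hE : IsFRing E) : IsFaithful E ↔ IsReduced E :=
  ⟨IsFaithful.isReduced, fun _ => hE.isFaithful⟩

end Ring

theorem stmt_3_general {E : Type*} [Ring E] [Lattice E]
    (hadd : ∀ a b c : E, a ≤ b → a + c ≤ b + c)
    (hmulpos : ∀ a b : E, 0 ≤ a → 0 ≤ b → 0 ≤ a * b)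
    (hf : ∀ a x y : E, 0 ≤ a → 0 ≤ x → 0 ≤ y → x ⊓ y = 0 →
      (a * x) ⊓ y = 0 ∧ (x * a) ⊓ y = 0) :
    (∀ x y : E, x * y = 0 → |x| ⊓ |y| = 0) ↔
      (∀ x : E, (∃ n : ℕ, 1 ≤ n ∧ x ^ n = 0) → x = 0) := by
  have : IsOrderedAddMonoid E := { add_le_add_left := fun a b h c => hadd a b c h }
  have hE : IsFRing E := ⟨hmulpos, fun a x y ha hx hy h => (hf a x y ha hx hy h).1,
    fun a x y ha hx hy h => (hf a x y ha hx hy h).2⟩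
  refine hE.isFaithful_iff_isReduced.trans ⟨fun h x ⟨n, _, hx⟩ => h.eq_zero x ⟨n, hx⟩, fun h => ?_⟩
  exact (isReduced_iff_pow_one_lt 2 one_lt_two).2 fun x hx => h x ⟨2, one_le_two, hx⟩

/-- An Archimedean `f`-algebra `E` is faithful (i.e. `x * y = 0` implies
`|x| ⊓ |y| = 0`) if and only if `E` has no nonzero nilpotent elements. -/
theorem stmt_3 {E : Type*} [Ring E] [Lattice E] [Module ℝ E]
    (hadd : ∀ a b c : E, a ≤ b → a + c ≤ b + c)
    (hmulpos : ∀ a b : E, 0 ≤ a → 0 ≤ b → 0 ≤ a * b)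
    (hf : ∀ a x y : E, 0 ≤ a → 0 ≤ x → 0 ≤ y → x ⊓ y = 0 →
      (a * x) ⊓ y = 0 ∧ (x * a) ⊓ y = 0)
    (harch : ∀ x y : E, 0 ≤ x → 0 ≤ y → (∀ n : ℕ, n • x ≤ y) → x = 0) :
    (∀ x y : E, x * y = 0 → |x| ⊓ |y| = 0) ↔
      (∀ x : E, (∃ n : ℕ, 1 ≤ n ∧ x ^ n = 0) → x = 0) :=
  stmt_3_general hadd hmulpos hf
end

section
/- Let Q be a topological space, Λ a dense subset of ℝ, and λ ↦ G_λ an increasing map from Λ into the power set of Q. Then there exists a unique continuous function f : Q → ℝ ∪ {±∞} (with the order topology on the extended reals) satisfying {f < λ} ⊆ G_λ ⊆ {f ≤ λ} for all λ ∈ Λ if and only if for all λ, μ ∈ Λ with λ < μ, the closure of G_λ is contained in the interior of G_μ. -/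
/-!
Any `f` squeezed between the `G λ` is determined by them, since `f q = inf {λ ∈ Λ | q ∈ G λ}`
by density of `Λ`; conversely this infimum is always squeezed between the `G λ` by monotonicity.
The closure condition is what makes a squeezed `f` continuous: for `λ < μ < ν` in `Λ`,
`interior (G ν)` is a neighbourhood of `{f < λ}` on which `f ≤ ν`, and the complement of
`closure (G λ)` is a neighbourhood of `{f > ν}` on which `f ≥ λ`. Conversely, for continuous `f`,
`closure (G λ) ⊆ {f ≤ λ} ⊆ {f < μ} ⊆ interior (G μ)`.
-/

open Set Filter Topology

lemma Dense.exists_mem_coe_ereal_between {Λ : Set ℝ} (hΛ : Dense Λ) {a b : EReal}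
    (hab : a < b) : ∃ l ∈ Λ, a < l ∧ (l : EReal) < b := by
  obtain ⟨r, har, hrb⟩ := EReal.lt_iff_exists_real_btwn.1 hab
  obtain ⟨s, hrs, hsb⟩ := EReal.lt_iff_exists_real_btwn.1 hrb
  obtain ⟨l, hl, hrl, hls⟩ := hΛ.exists_between (EReal.coe_lt_coe_iff.1 hrs)
  exact ⟨l, hl, har.trans (EReal.coe_lt_coe_iff.2 hrl), (EReal.coe_lt_coe_iff.2 hls).trans hsb⟩

lemma Dense.ereal_le_of_forall_lt_coe_imp_le {Λ : Set ℝ} (hΛ : Dense Λ) {a b : EReal}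
    (h : ∀ l ∈ Λ, a < l → b ≤ l) : b ≤ a := by
  by_contra! hab
  obtain ⟨l, hl, hal, hlb⟩ := hΛ.exists_mem_coe_ereal_between hab
  exact (h l hl hal).not_gt hlb

section LevelFunction

variable {Q : Type*} {Λ : Set ℝ} {G : ℝ → Set Q}

def IsLevelFunction (Λ : Set ℝ) (G : ℝ → Set Q) (f : Q → EReal) : Prop :=
  ∀ l ∈ Λ, {q | f q < (l : EReal)} ⊆ G l ∧ G l ⊆ {q | f q ≤ (l : EReal)}

namespace IsLevelFunction

variable {f g : Q → EReal}

lemma le (hΛ : Dense Λ) (hf : IsLevelFunction Λ G f) (hg : IsLevelFunction Λ G g) : g ≤ f :=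
  fun _ => hΛ.ereal_le_of_forall_lt_coe_imp_le fun l hl hlt => (hg l hl).2 ((hf l hl).1 hlt)

lemma eq (hΛ : Dense Λ) (hf : IsLevelFunction Λ G f) (hg : IsLevelFunction Λ G g) : f = g :=
  le_antisymm (hg.le hΛ hf) (hf.le hΛ hg)

variable [TopologicalSpace Q]

lemma closure_subset_interior (hf : IsLevelFunction Λ G f) (hcont : Continuous f)
    {l m : ℝ} (hl : l ∈ Λ) (hm : m ∈ Λ) (hlm : l < m) : closure (G l) ⊆ interior (G m) := by
  have hclosure : closure (G l) ⊆ {q | f q ≤ l} :=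
    closure_minimal (hf l hl).2 (isClosed_le hcont continuous_const)
  have hinterior : {q | f q < m} ⊆ interior (G m) :=
    interior_maximal (hf m hm).1 (isOpen_lt hcont continuous_const)
  exact fun q hq => hinterior ((hclosure hq).trans_lt (EReal.coe_lt_coe_iff.2 hlm))

variable (hΛ : Dense Λ)
  (hcl : ∀ l m : ℝ, l ∈ Λ → m ∈ Λ → l < m → closure (G l) ⊆ interior (G m))
include hΛ hcl

lemma upperSemicontinuous (hf : IsLevelFunction Λ G f) : UpperSemicontinuous f := by
  intro q a hqa
  obtain ⟨l, hl, hql, hla⟩ := hΛ.exists_mem_coe_ereal_between hqa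
  obtain ⟨m, hm, hlm, hma⟩ := hΛ.exists_mem_coe_ereal_between hla
  have hq : q ∈ interior (G m) :=
    hcl l m hl hm (EReal.coe_lt_coe_iff.1 hlm) (subset_closure ((hf l hl).1 hql))
  filter_upwards [isOpen_interior.mem_nhds hq] with x hx
  exact ((hf m hm).2 (interior_subset hx)).trans_lt hma

lemma lowerSemicontinuous (hf : IsLevelFunction Λ G f) : LowerSemicontinuous f := by
  intro q a haq
  obtain ⟨l, hl, hal, hlq⟩ := hΛ.exists_mem_coe_ereal_between haq
  obtain ⟨m, hm, hlm, hmq⟩ := hΛ.exists_mem_coe_ereal_between hlq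
  have hq : q ∉ closure (G l) := fun hq =>
    ((hf m hm).2 (interior_subset (hcl l m hl hm (EReal.coe_lt_coe_iff.1 hlm) hq))).not_gt hmq
  filter_upwards [isClosed_closure.isOpen_compl.mem_nhds hq] with x hx
  exact hal.trans_le (not_lt.1 fun hxl => hx (subset_closure ((hf l hl).1 hxl)))

lemma continuous (hf : IsLevelFunction Λ G f) : Continuous f :=
  continuous_iff_lower_upperSemicontinuous.2
    ⟨hf.lowerSemicontinuous hΛ hcl, hf.upperSemicontinuous hΛ hcl⟩

end IsLevelFunction

noncomputable def levelInf (Λ : Set ℝ) (G : ℝ → Set Q) (q : Q) : EReal :=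
  sInf ((↑) '' {l | l ∈ Λ ∧ q ∈ G l})

lemma levelInf_le {q : Q} {l : ℝ} (hl : l ∈ Λ) (hq : q ∈ G l) : levelInf Λ G q ≤ l :=
  sInf_le ⟨l, ⟨hl, hq⟩, rfl⟩

lemma levelInf_lt_iff {q : Q} {a : EReal} :
    levelInf Λ G q < a ↔ ∃ l ∈ Λ, (l : EReal) < a ∧ q ∈ G l := by
  simp only [levelInf, sInf_lt_iff, mem_image, mem_ofPred_eq]
  constructor
  · rintro ⟨_, ⟨l, ⟨hl, hq⟩, rfl⟩, hla⟩
    exact ⟨l, hl, hla, hq⟩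
  · rintro ⟨l, hl, hla, hq⟩
    exact ⟨l, ⟨l, ⟨hl, hq⟩, rfl⟩, hla⟩

lemma isLevelFunction_levelInf (hmono : ∀ l m : ℝ, l ∈ Λ → m ∈ Λ → l ≤ m → G l ⊆ G m) :
    IsLevelFunction Λ G (levelInf Λ G) := by
  refine fun l hl => ⟨fun q hq => ?_, fun q hq => levelInf_le hl hq⟩
  obtain ⟨m, hm, hml, hqm⟩ := levelInf_lt_iff.1 hq
  exact hmono m l hm hl (EReal.coe_lt_coe_iff.1 hml).le hqm

end LevelFunction

/-- Let `Q` be a topological space, `Λ` a dense subset of `ℝ`, and `λ ↦ G λ` an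
increasing map from `Λ` into the power set of `Q`.  There exists a unique
continuous `f : Q → ℝ ∪ {±∞}` with `{f < λ} ⊆ G λ ⊆ {f ≤ λ}` for all `λ ∈ Λ`
iff for all `λ < μ` in `Λ`, `closure (G λ) ⊆ interior (G μ)`. -/
theorem stmt_7 {Q : Type*} [TopologicalSpace Q] (Λ : Set ℝ) (hΛ : Dense Λ)
    (G : ℝ → Set Q)
    (hmono : ∀ l m : ℝ, l ∈ Λ → m ∈ Λ → l ≤ m → G l ⊆ G m) :
    (∃! f : Q → EReal, Continuous f ∧
        ∀ l ∈ Λ, {q | f q < (l : EReal)} ⊆ G l ∧ G l ⊆ {q | f q ≤ (l : EReal)}) ↔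
      (∀ l m : ℝ, l ∈ Λ → m ∈ Λ → l < m → closure (G l) ⊆ interior (G m)) := by
  constructor
  · rintro ⟨f, ⟨hcont, hf⟩, -⟩ l m hl hm hlm
    exact IsLevelFunction.closure_subset_interior hf hcont hl hm hlm
  · intro hcl
    have hf : IsLevelFunction Λ G (levelInf Λ G) := isLevelFunction_levelInf hmono
    exact ⟨levelInf Λ G, ⟨hf.continuous hΛ hcl, hf⟩, fun g hg => IsLevelFunction.eq hΛ hg.2 hf⟩
end

section
/- Let Q be a quasi-extremally disconnected compact Hausdorff space, Q₀ ⊆ Q an open dense Fσ subset, and f₀ : Q₀ → ℝ ∪ {±∞} a continuous function. Then there exists a unique continuous function f : Q → ℝ ∪ {±∞} such that f(q) = f₀(q) for all q ∈ Q₀. -/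
/-!
For each rational `r` let `V r` be the closure in `Q` of the superlevel set `{f₀ > r}`. That set is
open in `Q` (as `Q₀` is open) and `Fσ` (as `Q₀` is `Fσ`), so by quasi-extremal disconnectedness
`V r` is clopen. The function `f q = sup {r | q ∈ V r}` is then continuous, because its strict
super- and sublevel sets are unions of the `V r` and of their complements, and it agrees with `f₀`
on `Q₀`. Uniqueness holds because `Q₀` is dense and `EReal` is Hausdorff.
-/

open Set Topology

/-- An `Fσ` set is a countable union of closed sets. -/
def IsFsigma {Q : Type*} [TopologicalSpace Q] (s : Set Q) : Prop :=
  ∃ T : ℕ → Set Q, (∀ n, IsClosed (T n)) ∧ s = ⋃ n, T n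

section IsFsigma

variable {X : Type*} [TopologicalSpace X]

lemma IsFsigma.iUnion {ι : Type*} [Countable ι] {s : ι → Set X} (h : ∀ i, IsFsigma (s i)) :
    IsFsigma (⋃ i, s i) := by
  choose T hT hsT using h
  rcases isEmpty_or_nonempty ι with hι | hι
  · exact ⟨fun _ => ∅, fun _ => isClosed_empty, by simp⟩
  obtain ⟨e, he⟩ := exists_surjective_nat (ι × ℕ)
  refine ⟨fun n => T (e n).1 (e n).2, fun n => hT _ _, ?_⟩
  rw [he.iUnion_comp (fun p => T p.1 p.2), iUnion_prod']
  exact iUnion_congr hsT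

lemma IsFsigma.inter_isClosed {s C : Set X} (hs : IsFsigma s) (hC : IsClosed C) :
    IsFsigma (s ∩ C) := by
  obtain ⟨T, hT, rfl⟩ := hs
  exact ⟨fun n => T n ∩ C, fun n => (hT n).inter hC, iUnion_inter C T⟩

lemma IsFsigma.image_val {Q₀ : Set X} (hQ₀ : IsFsigma Q₀) {C : Set Q₀} (hC : IsClosed C) :
    IsFsigma (Subtype.val '' C) := by
  obtain ⟨C', hC', rfl⟩ := isClosed_induced_iff.mp hC
  rw [Subtype.image_preimage_coe]
  exact hQ₀.inter_isClosed hC'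

end IsFsigma

namespace EReal

lemma Ioi_eq_iUnion_Ici_rat (a : EReal) :
    Ioi a = ⋃ r : {r : ℚ // a < ((r : ℝ) : EReal)}, Ici ((r.1 : ℝ) : EReal) := by
  ext x
  simp only [mem_Ioi, mem_iUnion, mem_Ici, Subtype.exists, exists_prop]
  constructor
  · intro hax
    obtain ⟨r, har, hrx⟩ := exists_rat_btwn_of_lt hax
    exact ⟨r, har, hrx.le⟩
  · rintro ⟨r, har, hrx⟩
    exact har.trans_le hrx

lemma biSup_rat_eq {P : ℚ → Prop} {y : EReal} (hlt : ∀ r : ℚ, ((r : ℝ) : EReal) < y → P r)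
    (hle : ∀ r : ℚ, P r → ((r : ℝ) : EReal) ≤ y) : ⨆ (r : ℚ) (_ : P r), ((r : ℝ) : EReal) = y := by
  refine le_antisymm (iSup₂_le hle) (le_of_forall_lt fun c hcy => ?_)
  obtain ⟨r, hcr, hry⟩ := exists_rat_btwn_of_lt hcy
  exact hcr.trans_le (le_iSup₂_of_le (f := fun r (_ : P r) => ((r : ℝ) : EReal)) r (hlt r hry) le_rfl)

end EReal

lemma IsFsigma.image_val_preimage_Ioi {X : Type*} [TopologicalSpace X] {Q₀ : Set X}
    (hQ₀ : IsFsigma Q₀) {g : Q₀ → EReal} (hg : Continuous g) (a : EReal) :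
    IsFsigma (Subtype.val '' (g ⁻¹' Ioi a)) := by
  rw [EReal.Ioi_eq_iUnion_Ici_rat, preimage_iUnion, image_iUnion]
  exact IsFsigma.iUnion fun r => hQ₀.image_val (isClosed_Ici.preimage hg)

lemma continuous_biSup_rat_of_isClopen {X : Type*} [TopologicalSpace X] {V : ℚ → Set X}
    (hV : Antitone V) (hVc : ∀ r, IsClopen (V r)) :
    Continuous fun x => ⨆ (r : ℚ) (_ : x ∈ V r), ((r : ℝ) : EReal) := by
  refine OrderTopology.continuous_iff.mpr fun a => ⟨?_, ?_⟩
  · have : (fun x => ⨆ (r : ℚ) (_ : x ∈ V r), ((r : ℝ) : EReal)) ⁻¹' Ioi a =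
        ⋃ (r : ℚ) (_ : a < ((r : ℝ) : EReal)), V r := by
      ext x
      simp only [mem_preimage, mem_Ioi, lt_iSup_iff, mem_iUnion, exists_prop, and_comm]
    rw [this]
    exact isOpen_biUnion fun r _ => (hVc r).isOpen
  · have : (fun x => ⨆ (r : ℚ) (_ : x ∈ V r), ((r : ℝ) : EReal)) ⁻¹' Iio a =
        ⋃ (r : ℚ) (_ : ((r : ℝ) : EReal) < a), (V r)ᶜ := by
      ext x
      simp only [mem_preimage, mem_Iio, mem_iUnion, mem_compl_iff, exists_prop]
      constructor
      · intro hxa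
        obtain ⟨r, hxr, hra⟩ := EReal.exists_rat_btwn_of_lt hxa
        exact ⟨r, hra, fun hx => (le_iSup₂_of_le (f := fun r (_ : x ∈ V r) => ((r : ℝ) : EReal))
          r hx le_rfl).not_gt hxr⟩
      · rintro ⟨r, hra, hx⟩
        refine lt_of_le_of_lt (iSup₂_le fun s hs => ?_) hra
        by_contra! hrs
        exact hx (hV (by exact_mod_cast hrs.le) hs)
    rw [this]
    exact isOpen_biUnion fun r _ => (hVc r).isClosed.isOpen_compl

theorem exists_continuous_extension_of_isOpen_closure {X : Type*} [TopologicalSpace X]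
    (hqed : ∀ U : Set X, IsOpen U → IsFsigma U → IsOpen (closure U))
    {Q₀ : Set X} (hopen : IsOpen Q₀) (hFσ : IsFsigma Q₀) {f₀ : Q₀ → EReal} (hf₀ : Continuous f₀) :
    ∃ f : X → EReal, Continuous f ∧ ∀ q : Q₀, f q = f₀ q := by
  set V : ℚ → Set X := fun r => closure (Subtype.val '' (f₀ ⁻¹' Ioi ((r : ℝ) : EReal)))
  have hV : Antitone V := fun r s hrs =>
    closure_mono (image_mono (preimage_mono (Ioi_subset_Ioi (by exact_mod_cast hrs))))
  have hVc : ∀ r, IsClopen (V r) := fun r => ⟨isClosed_closure,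
    hqed _ (hopen.isOpenMap_subtype_val _ (isOpen_Ioi.preimage hf₀))
      (hFσ.image_val_preimage_Ioi hf₀ _)⟩
  refine ⟨_, continuous_biSup_rat_of_isClopen hV hVc, fun x => EReal.biSup_rat_eq
    (fun r hr => subset_closure ⟨x, hr, rfl⟩) fun r hx => ?_⟩
  rw [← mem_preimage, ← IsEmbedding.subtypeVal.closure_eq_preimage_closure_image] at hx
  have := hf₀.closure_preimage_subset _ hx
  rwa [closure_Ioi' ⟨⊤, EReal.coe_lt_top _⟩] at this

theorem stmt_8_general {Q : Type*} [TopologicalSpace Q]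
    (hqed : ∀ U : Set Q, IsOpen U → IsFsigma U → IsOpen (closure U))
    (Q₀ : Set Q) (hopen : IsOpen Q₀) (hdense : Dense Q₀) (hFσ : IsFsigma Q₀)
    (f₀ : Q₀ → EReal) (hf₀ : Continuous f₀) :
    ∃! f : Q → EReal, Continuous f ∧ ∀ q : Q₀, f q = f₀ q := by
  obtain ⟨f, hf, hff₀⟩ := exists_continuous_extension_of_isOpen_closure hqed hopen hFσ hf₀
  refine ⟨f, ⟨hf, hff₀⟩, fun g ⟨hg, hgf₀⟩ => hg.ext_on hdense hf fun q hq => ?_⟩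
  exact (hgf₀ ⟨q, hq⟩).trans (hff₀ ⟨q, hq⟩).symm

/-- Let `Q` be a quasi-extremally disconnected compact Hausdorff space, `Q₀ ⊆ Q`
an open dense `Fσ` subset, and `f₀ : Q₀ → ℝ ∪ {±∞}` continuous.  Then there is a
unique continuous `f : Q → ℝ ∪ {±∞}` extending `f₀`. -/
theorem stmt_8 {Q : Type*} [TopologicalSpace Q] [CompactSpace Q] [T2Space Q]
    (hqed : ∀ U : Set Q, IsOpen U → IsFsigma U → IsOpen (closure U))
    (Q₀ : Set Q) (hopen : IsOpen Q₀) (hdense : Dense Q₀) (hFσ : IsFsigma Q₀)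
    (f₀ : Q₀ → EReal) (hf₀ : Continuous f₀) :
    ∃! f : Q → EReal, Continuous f ∧ ∀ q : Q₀, f q = f₀ q :=
  stmt_8_general hqed Q₀ hopen hdense hFσ f₀ hf₀
end

section
/- Let Q be an extremally disconnected compact Hausdorff space. Then C∞(Q,ℝ), the space of continuous extended-real-valued functions taking infinite values only on nowhere dense sets, with pointwise order, is a Dedekind complete vector lattice (every nonempty order-bounded subset has a supremum). -/
/-!
The supremum of a bounded family `S` is the upper semicontinuous envelope `s` of the pointwise
supremum `⨆ f ∈ S, f`. The pointwise supremum is lower semicontinuous, so each strict superlevel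
set `{s > a}` is a union of closures of open sets; in an extremally disconnected space these
closures are open, so `s` is lower semicontinuous as well, hence continuous. Squeezed between one
member of `S` and an upper bound, `s` is infinite only on a nowhere dense set, and it lies below
every continuous upper bound of `S`.
-/

open Set Filter Topology

/-- `C∞(Q, ℝ)`: continuous extended-real-valued functions on `Q` taking infinite
values only on a nowhere dense set. -/
def Cinf (Q : Type*) [TopologicalSpace Q] : Type _ :=
  {f : C(Q, EReal) // IsNowhereDense {q | f q = ⊤ ∨ f q = ⊥}}

/-- The pointwise order on `C∞(Q, ℝ)`. -/
noncomputable instance Cinf.instPartialOrder (Q : Type*) [TopologicalSpace Q] :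
    PartialOrder (Cinf Q) :=
  PartialOrder.lift (fun f => (f.1 : Q → EReal))
    (fun f g h => Subtype.ext (ContinuousMap.ext fun q => congrFun h q))

lemma IsNowhereDense.union {X : Type*} [TopologicalSpace X] {s t : Set X}
    (hs : IsNowhereDense s) (ht : IsNowhereDense t) : IsNowhereDense (s ∪ t) := by
  rwa [IsNowhereDense, closure_union,
    interior_union_isClosed_of_interior_empty isClosed_closure ht]

section UpperEnvelope

variable {X α : Type*} [TopologicalSpace X] [CompleteLinearOrder α]

/-- The upper semicontinuous envelope of `f`, i.e. `x ↦ limsup f (𝓝 x)`. -/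
def upperEnvelope (f : X → α) (x : X) : α :=
  ⨅ U ∈ 𝓝 x, ⨆ y ∈ U, f y

lemma le_upperEnvelope (f : X → α) (x : X) : f x ≤ upperEnvelope f x :=
  le_iInf₂ fun _ hU => le_iSup₂ (f := fun y _ => f y) x (mem_of_mem_nhds hU)

lemma upperEnvelope_le [DenselyOrdered α] {f g : X → α} (hg : UpperSemicontinuous g)
    (hfg : f ≤ g) : upperEnvelope f ≤ g := by
  refine fun x => le_of_forall_gt_imp_ge_of_dense fun a ha => ?_
  calc upperEnvelope f x ≤ ⨆ y ∈ {y | g y < a}, f y :=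
      iInf₂_le (f := fun U (_ : U ∈ 𝓝 x) => ⨆ y ∈ U, f y) {y | g y < a} (hg x a ha)
    _ ≤ a := iSup₂_le fun y hy => (hfg y).trans hy.le

lemma upperSemicontinuous_upperEnvelope (f : X → α) :
    UpperSemicontinuous (upperEnvelope f) := by
  intro x a hxa
  obtain ⟨U, hU, hUa⟩ : ∃ U ∈ 𝓝 x, ⨆ y ∈ U, f y < a := by
    simpa only [upperEnvelope, iInf_lt_iff, exists_prop] using hxa
  filter_upwards [interior_mem_nhds.2 hU] with x' hx'
  calc upperEnvelope f x' ≤ ⨆ y ∈ interior U, f y :=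
      iInf₂_le _ (isOpen_interior.mem_nhds hx')
    _ ≤ ⨆ y ∈ U, f y := biSup_mono fun _ => (interior_subset ·)
    _ < a := hUa

lemma upperEnvelope_preimage_Ioi [DenselyOrdered α] (f : X → α) (a : α) :
    upperEnvelope f ⁻¹' Ioi a = ⋃ b ∈ Ioi a, closure (f ⁻¹' Ioi b) := by
  ext x
  simp only [mem_preimage, mem_Ioi, mem_iUnion, exists_prop, mem_closure_iff_nhds]
  constructor
  · intro hx
    obtain ⟨b, hab, hbx⟩ := exists_between hx
    refine ⟨b, hab, fun U hU => ?_⟩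
    obtain ⟨y, hyU, hyb⟩ : ∃ y ∈ U, b < f y := by
      simpa only [lt_iSup_iff, exists_prop] using hbx.trans_le (iInf₂_le U hU)
    exact ⟨y, hyU, hyb⟩
  · rintro ⟨b, hab, hb⟩
    refine hab.trans_le (le_iInf₂ fun U hU => ?_)
    obtain ⟨y, hyU, hyb⟩ := hb U hU
    exact hyb.le.trans (le_iSup₂ (f := fun y _ => f y) y hyU)

lemma ExtremallyDisconnected.continuous_upperEnvelope [ExtremallyDisconnected X]
    [TopologicalSpace α] [OrderTopology α] [DenselyOrdered α] {f : X → α}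
    (hf : LowerSemicontinuous f) :
    Continuous (upperEnvelope f) := by
  refine continuous_iff_lower_upperSemicontinuous.2 ⟨?_, upperSemicontinuous_upperEnvelope f⟩
  rw [lowerSemicontinuous_iff_isOpen_preimage]
  intro a
  rw [upperEnvelope_preimage_Ioi]
  exact isOpen_biUnion fun b _ =>
    ExtremallyDisconnected.open_closure _ (hf.isOpen_preimage b)

end UpperEnvelope

namespace Cinf

variable {Q : Type*} [TopologicalSpace Q]

def ofLeOfLe (g : C(Q, EReal)) {f h : Cinf Q} (hfg : ∀ q, f.1 q ≤ g q)
    (hgh : ∀ q, g q ≤ h.1 q) : Cinf Q :=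
  ⟨g, (h.2.union f.2).mono fun q hq => by
    rcases hq with hq | hq
    · exact .inl (.inl (top_le_iff.1 (hq.symm.trans_le (hgh q))))
    · exact .inr (.inr (le_bot_iff.1 ((hfg q).trans_eq hq)))⟩

end Cinf

theorem stmt_10_general (Q : Type*) [TopologicalSpace Q]
    [ExtremallyDisconnected Q] :
    ∀ S : Set (Cinf Q), S.Nonempty → BddAbove S → ∃ s, IsLUB S s := by
  rintro S ⟨f₀, hf₀⟩ ⟨b, hb⟩
  set sup : Q → EReal := fun q => ⨆ f ∈ S, f.1 q
  have hsup : LowerSemicontinuous sup :=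
    lowerSemicontinuous_biSup fun f _ => f.1.continuous.lowerSemicontinuous
  have le_env : ∀ f ∈ S, ∀ q, f.1 q ≤ upperEnvelope sup q := fun f hf q =>
    (le_iSup₂ (f := fun g (_ : g ∈ S) => g.1 q) f hf).trans (le_upperEnvelope sup q)
  have env_le : ∀ c ∈ upperBounds S, ∀ q, upperEnvelope sup q ≤ c.1 q := fun c hc =>
    upperEnvelope_le c.1.continuous.upperSemicontinuous fun q => iSup₂_le fun f hf => hc hf q
  let s : Cinf Q := .ofLeOfLe ⟨_, ExtremallyDisconnected.continuous_upperEnvelope hsup⟩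
    (le_env f₀ hf₀) (env_le b hb)
  exact ⟨s, fun f hf => le_env f hf, fun c hc => env_le c hc⟩

/-- For an extremally disconnected compact Hausdorff space `Q`, `C∞(Q, ℝ)` with
the pointwise order is Dedekind complete: every nonempty order-bounded subset
has a least upper bound. -/
theorem stmt_10 (Q : Type*) [TopologicalSpace Q] [CompactSpace Q] [T2Space Q]
    [ExtremallyDisconnected Q] :
    ∀ S : Set (Cinf Q), S.Nonempty → BddAbove S → ∃ s, IsLUB S s :=
  stmt_10_general Q
end

section
/- For an extremally disconnected compact Hausdorff space Q, the f-algebra C∞(Q,ℝ) is faithful: if f·g = 0 then |f| ⊓ |g| = 0. -/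
/-! Off the nowhere dense set where `f` or `g` is infinite, `f q * g q = 0` forces one factor to
vanish, so the continuous function `|f| ⊓ |g|` is zero on a dense set, hence everywhere. -/

theorem IsNowhereDense.dense_compl_union {X : Type*} [TopologicalSpace X] {s t : Set X}
    (hs : IsNowhereDense s) (ht : IsNowhereDense t) : Dense (s ∪ t)ᶜ := by
  have hs' : Dense (closure s)ᶜ := interior_eq_empty_iff_dense_compl.1 hs
  have ht' : Dense (closure t)ᶜ := interior_eq_empty_iff_dense_compl.1 ht
  refine (hs'.inter_of_isOpen_left ht' isClosed_closure.isOpen_compl).mono ?_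
  rw [Set.compl_union]
  exact Set.inter_subset_inter (Set.compl_subset_compl.2 subset_closure)
    (Set.compl_subset_compl.2 subset_closure)

theorem EReal.zero_le_max_neg (a : EReal) : 0 ≤ max a (-a) := by
  rcases le_total 0 a with h | h
  · exact le_max_of_le_left h
  · exact le_max_of_le_right (EReal.neg_nonneg.2 h)

theorem EReal.min_max_neg_eq_zero_of_mul_eq_zero {a b : EReal} (h : a * b = 0) :
    min (max a (-a)) (max b (-b)) = 0 := by
  rcases mul_eq_zero.1 h with rfl | rfl
  · simpa using EReal.zero_le_max_neg b
  · simpa using EReal.zero_le_max_neg a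

theorem stmt_12_general (Q : Type*) [TopologicalSpace Q] (f g : Cinf Q)
    (hfg : ∀ q, (f.1 q ≠ ⊤ ∧ f.1 q ≠ ⊥) → (g.1 q ≠ ⊤ ∧ g.1 q ≠ ⊥) →
      f.1 q * g.1 q = 0) :
    ∀ q, min (max (f.1 q) (-f.1 q)) (max (g.1 q) (-g.1 q)) = 0 := by
  have hcont : Continuous fun q => min (max (f.1 q) (-f.1 q)) (max (g.1 q) (-g.1 q)) :=
    (f.1.continuous.max f.1.continuous.neg).min (g.1.continuous.max g.1.continuous.neg)
  have hzero : Set.EqOn (fun q => min (max (f.1 q) (-f.1 q)) (max (g.1 q) (-g.1 q))) 0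
      ({q | f.1 q = ⊤ ∨ f.1 q = ⊥} ∪ {q | g.1 q = ⊤ ∨ g.1 q = ⊥})ᶜ := by
    intro q hq
    simp only [Set.compl_union, Set.mem_inter_iff, Set.mem_compl_iff, Set.mem_ofPred_eq,
      not_or] at hq
    exact EReal.min_max_neg_eq_zero_of_mul_eq_zero (hfg q hq.1 hq.2)
  exact congrFun (hcont.ext_on (f.2.dense_compl_union g.2) continuous_const hzero)

/-- For an extremally disconnected compact Hausdorff space `Q`, the `f`-algebra
`C∞(Q, ℝ)` is faithful: if the product `f·g` (defined pointwise on the dense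
open set where both factors are finite) vanishes, then `|f| ⊓ |g| = 0`. -/
theorem stmt_12 (Q : Type*) [TopologicalSpace Q] [CompactSpace Q] [T2Space Q]
    [ExtremallyDisconnected Q] (f g : Cinf Q)
    (hfg : ∀ q, (f.1 q ≠ ⊤ ∧ f.1 q ≠ ⊥) → (g.1 q ≠ ⊤ ∧ g.1 q ≠ ⊥) →
      f.1 q * g.1 q = 0) :
    ∀ q, min (max (f.1 q) (-f.1 q)) (max (g.1 q) (-g.1 q)) = 0 :=
  stmt_12_general Q f g hfg
end
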